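/- If any dark state exists, then a pure dark state exists: there is a unit vector ψ with P ψ = ψ such that ψψᴴ is a dark state (L(ψψᴴ) = 0 and ψψᴴ = P(ψψᴴ)P). -/

import Mathlib

/-!
On a state supported on the ground manifold (ρ = PρP) every jump operator σ annihilates ρ from
the left and σᴴ annihilates it from the right, since σP = 0; so the dissipator vanishes and
L(ρ) = 0 reduces to [H, ρ] = 0. The range of a dark state ρ is therefore a nonzero H-invariant
subspace of the ground manifold, and a normalised eigenvector ψ of H in it gives a pure state
ψψᴴ that is again supported on the ground manifold and, the eigenvalue of H being real, commutes
with H.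
-/

open Matrix Complex BigOperators ComplexOrder

/-- Projection onto the ground-state indices. -/
noncomputable def Pg (Ng Ne : ℕ) : Matrix (Fin Ng ⊕ Fin Ne) (Fin Ng ⊕ Fin Ne) ℂ :=
  Matrix.diagonal (Sum.elim (fun _ => 1) (fun _ => 0))

/-- Projection onto the excited-state indices. -/
noncomputable def Qe (Ng Ne : ℕ) : Matrix (Fin Ng ⊕ Fin Ne) (Fin Ng ⊕ Fin Ne) ℂ :=
  1 - Pg Ng Ne

/-- Jump operator |g_i⟩⟨e_j|. -/
noncomputable def jump (Ng Ne : ℕ) (i : Fin Ng) (j : Fin Ne) :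
    Matrix (Fin Ng ⊕ Fin Ne) (Fin Ng ⊕ Fin Ne) ℂ :=
  Matrix.single (Sum.inl i) (Sum.inr j) 1

/-- Decay operator Γ = Σ γ_{ij} σ_{ij}ᴴ σ_{ij}. -/
noncomputable def Gam (Ng Ne : ℕ) (γ : Fin Ng → Fin Ne → ℝ) :
    Matrix (Fin Ng ⊕ Fin Ne) (Fin Ng ⊕ Fin Ne) ℂ :=
  ∑ i, ∑ j, (γ i j : ℂ) • ((jump Ng Ne i j)ᴴ * jump Ng Ne i j)

/-- The Lindblad generator. -/
noncomputable def Lindblad (Ng Ne : ℕ) (H : Matrix (Fin Ng ⊕ Fin Ne) (Fin Ng ⊕ Fin Ne) ℂ)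
    (γ : Fin Ng → Fin Ne → ℝ) (ρ : Matrix (Fin Ng ⊕ Fin Ne) (Fin Ng ⊕ Fin Ne) ℂ) :
    Matrix (Fin Ng ⊕ Fin Ne) (Fin Ng ⊕ Fin Ne) ℂ :=
  (-Complex.I) • (H * ρ - ρ * H) +
    ∑ i, ∑ j, (γ i j : ℂ) •
      (jump Ng Ne i j * ρ * (jump Ng Ne i j)ᴴ -
        (1 / 2 : ℂ) • ((jump Ng Ne i j)ᴴ * jump Ng Ne i j * ρ +
          ρ * ((jump Ng Ne i j)ᴴ * jump Ng Ne i j)))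

/-- A dark state: a density matrix annihilated by the Lindbladian and supported on the
ground-state subspace. -/
def IsDarkState (Ng Ne : ℕ) (H : Matrix (Fin Ng ⊕ Fin Ne) (Fin Ng ⊕ Fin Ne) ℂ)
    (γ : Fin Ng → Fin Ne → ℝ) (ρ : Matrix (Fin Ng ⊕ Fin Ne) (Fin Ng ⊕ Fin Ne) ℂ) : Prop :=
  ρ.PosSemidef ∧ ρ.trace = 1 ∧ Lindblad Ng Ne H γ ρ = 0 ∧ ρ = Pg Ng Ne * ρ * Pg Ng Ne

namespace Matrix

variable {n : Type*} [Fintype n]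

theorem exists_mulVec_eq_smul_mem_range_of_commute {K : Type*} [Field K] [IsAlgClosed K]
    [DecidableEq n] {A B : Matrix n n K} (hAB : Commute A B) (hB : B ≠ 0) :
    ∃ μ : K, ∃ w ∈ Set.range B.mulVec, w ≠ 0 ∧ A *ᵥ w = μ • w := by
  set S := LinearMap.range B.mulVecLin
  have : Nontrivial S := Submodule.nontrivial_iff_ne_bot.mpr fun h =>
    hB (Matrix.toLin'.map_eq_zero_iff.mp (LinearMap.range_eq_bot.mp h))
  have hAS : ∀ w ∈ S, A.mulVecLin w ∈ S := by
    rintro _ ⟨u, rfl⟩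
    exact ⟨A *ᵥ u, by simp [mulVec_mulVec, hAB.eq]⟩
  obtain ⟨μ, hμ⟩ := Module.End.exists_eigenvalue (A.mulVecLin.restrict hAS)
  obtain ⟨⟨w, hwS⟩, hw⟩ := hμ.exists_hasEigenvector
  refine ⟨μ, w, hwS, fun h => hw.2 (Subtype.ext h), ?_⟩
  simpa using congrArg Subtype.val hw.apply_eq_smul

theorem IsHermitian.star_eq_of_mulVec_eq_smul {R : Type*} [Field R] [PartialOrder R]
    [StarRing R] [StarOrderedRing R] {A : Matrix n n R} (hA : A.IsHermitian) {w : n → R}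
    (hw : w ≠ 0) {μ : R} (hAw : A *ᵥ w = μ • w) : star μ = μ := by
  have hww : star w ⬝ᵥ w ≠ 0 := dotProduct_star_self_eq_zero.not.mpr hw
  refine mul_right_cancel₀ hww ?_
  calc star μ * (star w ⬝ᵥ w) = star (A *ᵥ w) ⬝ᵥ w := by
        rw [hAw, star_smul, smul_dotProduct, smul_eq_mul]
    _ = star w ⬝ᵥ (A *ᵥ w) := by rw [star_mulVec, hA.eq, dotProduct_mulVec]
    _ = μ * (star w ⬝ᵥ w) := by rw [hAw, dotProduct_smul, smul_eq_mul]

theorem IsHermitian.commute_vecMulVec_star {R : Type*} [Field R] [PartialOrder R]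
    [StarRing R] [StarOrderedRing R] {A : Matrix n n R} (hA : A.IsHermitian) {w : n → R}
    (hw : w ≠ 0) {μ : R} (hAw : A *ᵥ w = μ • w) : Commute A (vecMulVec w (star w)) := by
  have hwA : star w ᵥ* A = μ • star w := by
    rw [← hA.eq, ← star_mulVec, hAw, star_smul, hA.star_eq_of_mulVec_eq_smul hw hAw]
  rw [Commute, SemiconjBy, mul_vecMulVec, vecMulVec_mul, hAw, hwA, smul_vecMulVec,
    vecMulVec_smul]

theorem mul_vecMulVec_star_mul_of_mulVec_eq {R : Type*} [CommSemiring R] [StarRing R]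
    {P : Matrix n n R} (hP : P.IsHermitian) {w : n → R} (hPw : P *ᵥ w = w) :
    P * vecMulVec w (star w) * P = vecMulVec w (star w) := by
  rw [mul_vecMulVec, vecMulVec_mul, hPw, ← hP.eq, ← star_mulVec, hPw]

theorem exists_smul_star_dotProduct_smul_eq_one {𝕜 : Type*} [RCLike 𝕜] {w : n → 𝕜}
    (hw : w ≠ 0) : ∃ c : 𝕜, star (c • w) ⬝ᵥ (c • w) = 1 := by
  obtain ⟨r, hr, hrw⟩ := RCLike.pos_iff_exists_ofReal.mp
    ((dotProduct_star_self_nonneg w).lt_of_ne' (dotProduct_star_self_eq_zero.not.mpr hw))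
  refine ⟨((√r)⁻¹ : ℝ), ?_⟩
  have hsqrt : (√r)⁻¹ * ((√r)⁻¹ * r) = 1 := by
    rw [← mul_assoc, ← mul_inv, Real.mul_self_sqrt hr.le, inv_mul_cancel₀ hr.ne']
  rw [star_smul, smul_dotProduct, dotProduct_smul, ← hrw, RCLike.star_def, RCLike.conj_ofReal,
    smul_eq_mul, smul_eq_mul]
  exact_mod_cast hsqrt

end Matrix

theorem isHermitian_Pg (Ng Ne : ℕ) : (Pg Ng Ne).IsHermitian :=
  isHermitian_diagonal_of_self_adjoint _ (by ext (i | j) <;> simp)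

theorem Pg_mul_Pg (Ng Ne : ℕ) : Pg Ng Ne * Pg Ng Ne = Pg Ng Ne := by
  rw [Pg, diagonal_mul_diagonal]
  congr 1
  ext (i | j) <;> simp

theorem jump_mul_Pg (Ng Ne : ℕ) (i : Fin Ng) (j : Fin Ne) : jump Ng Ne i j * Pg Ng Ne = 0 := by
  ext a b
  simp only [jump, Pg, mul_diagonal, single_apply, Matrix.zero_apply]
  split_ifs with h
  · simp [← h.2]
  · simp

theorem Pg_mul_conjTranspose_jump (Ng Ne : ℕ) (i : Fin Ng) (j : Fin Ne) :
    Pg Ng Ne * (jump Ng Ne i j)ᴴ = 0 := by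
  rw [← (isHermitian_Pg Ng Ne).eq, ← conjTranspose_mul, jump_mul_Pg, conjTranspose_zero]

theorem Lindblad_eq_of_eq_Pg_mul_mul_Pg {Ng Ne : ℕ}
    (H : Matrix (Fin Ng ⊕ Fin Ne) (Fin Ng ⊕ Fin Ne) ℂ) (γ : Fin Ng → Fin Ne → ℝ)
    {ρ : Matrix (Fin Ng ⊕ Fin Ne) (Fin Ng ⊕ Fin Ne) ℂ}
    (hρ : ρ = Pg Ng Ne * ρ * Pg Ng Ne) :
    Lindblad Ng Ne H γ ρ = (-Complex.I) • (H * ρ - ρ * H) := by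
  have hjρ : ∀ i j, jump Ng Ne i j * ρ = 0 := fun i j => by
    rw [hρ, ← mul_assoc, ← mul_assoc, jump_mul_Pg, zero_mul, zero_mul]
  have hρj : ∀ i j, ρ * (jump Ng Ne i j)ᴴ = 0 := fun i j => by
    rw [hρ, mul_assoc, Pg_mul_conjTranspose_jump, mul_zero]
  have hterm : ∀ i j, jump Ng Ne i j * ρ * (jump Ng Ne i j)ᴴ - (1 / 2 : ℂ) •
      ((jump Ng Ne i j)ᴴ * jump Ng Ne i j * ρ + ρ * ((jump Ng Ne i j)ᴴ * jump Ng Ne i j)) = 0 :=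
    fun i j => by rw [hjρ, mul_assoc, hjρ, ← mul_assoc, hρj]; simp
  rw [Lindblad]
  simp only [hterm, smul_zero, Finset.sum_const_zero, add_zero]

theorem Lindblad_eq_zero_iff_commute {Ng Ne : ℕ}
    (H : Matrix (Fin Ng ⊕ Fin Ne) (Fin Ng ⊕ Fin Ne) ℂ) (γ : Fin Ng → Fin Ne → ℝ)
    {ρ : Matrix (Fin Ng ⊕ Fin Ne) (Fin Ng ⊕ Fin Ne) ℂ}
    (hρ : ρ = Pg Ng Ne * ρ * Pg Ng Ne) :
    Lindblad Ng Ne H γ ρ = 0 ↔ Commute H ρ := by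
  rw [Lindblad_eq_of_eq_Pg_mul_mul_Pg H γ hρ, smul_eq_zero, sub_eq_zero]
  simp [Commute, SemiconjBy, Complex.I_ne_zero]

theorem isDarkState_vecMulVec {Ng Ne : ℕ} {H : Matrix (Fin Ng ⊕ Fin Ne) (Fin Ng ⊕ Fin Ne) ℂ}
    (hH : H.IsHermitian) (γ : Fin Ng → Fin Ne → ℝ) {ψ : Fin Ng ⊕ Fin Ne → ℂ} {μ : ℂ}
    (hψ : star ψ ⬝ᵥ ψ = 1) (hPψ : Pg Ng Ne *ᵥ ψ = ψ) (hHψ : H *ᵥ ψ = μ • ψ) :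
    IsDarkState Ng Ne H γ (vecMulVec ψ (star ψ)) := by
  have hsupp := (mul_vecMulVec_star_mul_of_mulVec_eq (isHermitian_Pg Ng Ne) hPψ).symm
  have hψ0 : ψ ≠ 0 := by rintro rfl; simp at hψ
  refine ⟨posSemidef_vecMulVec_self_star ψ, ?_, ?_, hsupp⟩
  · rw [trace_vecMulVec, dotProduct_comm, hψ]
  · exact (Lindblad_eq_zero_iff_commute H γ hsupp).mpr (hH.commute_vecMulVec_star hψ0 hHψ)

theorem pure_dark_state_exists_of_dark_state_exists_general
    (Ng Ne : ℕ)
    (H : Matrix (Fin Ng ⊕ Fin Ne) (Fin Ng ⊕ Fin Ne) ℂ) (hH : H.IsHermitian)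
    (γ : Fin Ng → Fin Ne → ℝ)
    (hexists : ∃ ρ : Matrix (Fin Ng ⊕ Fin Ne) (Fin Ng ⊕ Fin Ne) ℂ,
      IsDarkState Ng Ne H γ ρ) :
    ∃ ψ : Fin Ng ⊕ Fin Ne → ℂ, star ψ ⬝ᵥ ψ = 1 ∧ Pg Ng Ne *ᵥ ψ = ψ ∧
      IsDarkState Ng Ne H γ (vecMulVec ψ (star ψ)) := by
  obtain ⟨ρ, -, htr, hL, hsupp⟩ := hexists
  have hρ0 : ρ ≠ 0 := by rintro rfl; simp at htr
  have hcomm : Commute H ρ := (Lindblad_eq_zero_iff_commute H γ hsupp).mp hL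
  obtain ⟨μ, _, ⟨u, rfl⟩, hw0, hHw⟩ := exists_mulVec_eq_smul_mem_range_of_commute hcomm hρ0
  obtain ⟨c, hc⟩ := exists_smul_star_dotProduct_smul_eq_one hw0
  have hPρ : Pg Ng Ne * ρ = ρ := by
    rw [hsupp, ← mul_assoc, ← mul_assoc, Pg_mul_Pg]
  have hPψ : Pg Ng Ne *ᵥ (c • ρ *ᵥ u) = c • ρ *ᵥ u := by
    rw [mulVec_smul, mulVec_mulVec, hPρ]
  have hHψ : H *ᵥ (c • ρ *ᵥ u) = μ • c • ρ *ᵥ u := by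
    rw [mulVec_smul, hHw, smul_comm]
  exact ⟨c • ρ *ᵥ u, hc, hPψ, isDarkState_vecMulVec hH γ hc hPψ hHψ⟩

theorem pure_dark_state_exists_of_dark_state_exists
    (Ng Ne : ℕ) (hNg : 1 ≤ Ng) (hNe : 1 ≤ Ne)
    (H : Matrix (Fin Ng ⊕ Fin Ne) (Fin Ng ⊕ Fin Ne) ℂ) (hH : H.IsHermitian)
    (γ : Fin Ng → Fin Ne → ℝ) (hγ : ∀ i j, 0 ≤ γ i j)
    (hγpos : ∀ j, 0 < ∑ i, γ i j)
    (hexists : ∃ ρ : Matrix (Fin Ng ⊕ Fin Ne) (Fin Ng ⊕ Fin Ne) ℂ,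
      IsDarkState Ng Ne H γ ρ) :
    ∃ ψ : Fin Ng ⊕ Fin Ne → ℂ, star ψ ⬝ᵥ ψ = 1 ∧ Pg Ng Ne *ᵥ ψ = ψ ∧
      IsDarkState Ng Ne H γ (vecMulVec ψ (star ψ)) :=
  pure_dark_state_exists_of_dark_state_exists_general Ng Ne H hH γ hexists
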